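/- In the modal logic S5 (equivalently, over Kripke frames whose accessibility relation is an equivalence relation), formulas with at most s variables are valid in all S5 frames if and only if they are valid in the single cluster frame C_{2^s} on 2^s points with total accessibility. Consequently, if k ≥ 2^s, then a formula in at most s variables is valid on C_k if and only if it is valid on every cluster C_m with m ≥ 1. -/

import Mathlib

/-- Modal formulas in negation normal form. -/
inductive Fm where
  | var : ℕ → Fm
  | nvar : ℕ → Fm
  | bot : Fm
  | top : Fm
  | and : Fm → Fm → Fm
  | or : Fm → Fm → Fm
  | dia : Fm → Fm
  | box : Fm → Fm

/-- Variables occurring in a formula. -/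
def Fm.vars : Fm → Finset ℕ
  | .var n => {n}
  | .nvar n => {n}
  | .bot => ∅
  | .top => ∅
  | .and a b => a.vars ∪ b.vars
  | .or a b => a.vars ∪ b.vars
  | .dia a => a.vars
  | .box a => a.vars

/-- Kripke semantics for formulas in negation normal form. -/
def ksatN {W : Type*} (R : W → W → Prop) (ϑ : ℕ → Set W) : Fm → W → Prop
  | .var n, w => w ∈ ϑ n
  | .nvar n, w => w ∉ ϑ n
  | .bot, _ => False
  | .top, _ => True
  | .and a b, w => ksatN R ϑ a w ∧ ksatN R ϑ b w
  | .or a b, w => ksatN R ϑ a w ∨ ksatN R ϑ b w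
  | .dia a, w => ∃ v, R w v ∧ ksatN R ϑ a v
  | .box a, w => ∀ v, R w v → ksatN R ϑ a v

/-- Validity on a Kripke frame. -/
def kvalid {W : Type*} (R : W → W → Prop) (φ : Fm) : Prop :=
  ∀ (ϑ : ℕ → Set W) (w : W), ksatN R ϑ φ w

/-- The total relation on `Fin k` (the cluster `C_k`). -/
def totR (k : ℕ) : Fin k → Fin k → Prop := fun _ _ => True

structure IsPMorphism {W' W : Type*} (R' : W' → W' → Prop) (R : W → W → Prop) (f : W' → W) :
    Prop where
  forth : ∀ ⦃x y⦄, R' x y → R (f x) (f y)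
  back : ∀ ⦃x v⦄, R (f x) v → ∃ y, R' x y ∧ f y = v

section PMorphism

variable {W' W : Type*} {R' : W' → W' → Prop} {R : W → W → Prop} {f : W' → W}

theorem IsPMorphism.ksatN_comap_iff (hf : IsPMorphism R' R f) (ϑ : ℕ → Set W) (φ : Fm) (x : W') :
    ksatN R' (fun n => f ⁻¹' ϑ n) φ x ↔ ksatN R ϑ φ (f x) := by
  induction φ generalizing x with
  | var | nvar | bot | top => exact Iff.rfl
  | and a b iha ihb => exact and_congr (iha x) (ihb x)
  | or a b iha ihb => exact or_congr (iha x) (ihb x)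
  | dia a ih =>
    constructor
    · rintro ⟨y, hxy, hy⟩
      exact ⟨f y, hf.forth hxy, (ih y).1 hy⟩
    · rintro ⟨v, hv, ha⟩
      obtain ⟨y, hxy, rfl⟩ := hf.back hv
      exact ⟨y, hxy, (ih y).2 ha⟩
  | box a ih =>
    constructor
    · intro ha v hv
      obtain ⟨y, hxy, rfl⟩ := hf.back hv
      exact (ih y).1 (ha y hxy)
    · exact fun ha y hxy => (ih y).2 (ha _ (hf.forth hxy))

theorem IsPMorphism.kvalid_of_surjective (hf : IsPMorphism R' R f)
    (hsurj : Function.Surjective f) {φ : Fm} (h : kvalid R' φ) : kvalid R φ := by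
  intro ϑ w
  obtain ⟨x, rfl⟩ := hsurj w
  exact (hf.ksatN_comap_iff ϑ φ x).1 (h _ x)

theorem isPMorphism_of_surjective (hsurj : Function.Surjective f) :
    IsPMorphism (fun _ _ : W' => True) (fun _ _ : W => True) f where
  forth _ _ _ := trivial
  back _ v _ := (hsurj v).imp fun _ hy => ⟨trivial, hy⟩

end PMorphism

theorem ksatN_congr_vars {W : Type*} (R : W → W → Prop) {ϑ ϑ' : ℕ → Set W} (φ : Fm)
    (h : ∀ n ∈ φ.vars, ϑ n = ϑ' n) (w : W) : ksatN R ϑ φ w ↔ ksatN R ϑ' φ w := by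
  induction φ generalizing w with
  | var n | nvar n => simp only [ksatN, h n (by simp [Fm.vars])]
  | bot | top => exact Iff.rfl
  | and a b iha ihb =>
    exact and_congr (iha (fun n hn => h n (by simp [Fm.vars, hn])) w)
      (ihb (fun n hn => h n (by simp [Fm.vars, hn])) w)
  | or a b iha ihb =>
    exact or_congr (iha (fun n hn => h n (by simp [Fm.vars, hn])) w)
      (ihb (fun n hn => h n (by simp [Fm.vars, hn])) w)
  | dia a ih => exact exists_congr fun v => and_congr_right' (ih h v)
  | box a ih => exact forall_congr' fun v => imp_congr_right fun _ => ih h v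

theorem kvalid_of_forall_kvalid_cluster {W : Type*} {R : W → W → Prop} (hR : Equivalence R)
    {φ : Fm} (h : ∀ w, kvalid (fun _ _ : {v // R w v} => True) φ) : kvalid R φ := by
  intro ϑ w
  have hval : IsPMorphism (fun _ _ : {v // R w v} => True) R Subtype.val :=
    { forth := fun x y _ => hR.trans (hR.symm x.2) y.2
      back := fun x v hv => ⟨⟨v, hR.trans x.2 hv⟩, trivial, rfl⟩ }
  exact (hval.ksatN_comap_iff ϑ φ ⟨w, hR.refl w⟩).1 (h w _ _)

theorem kvalid_total_of_card_le {Y : Type*} [Finite Y] [Nonempty Y] {n : ℕ}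
    (hY : Nat.card Y ≤ n) {φ : Fm} (h : kvalid (totR n) φ) :
    kvalid (fun _ _ : Y => True) φ := by
  have := Fintype.ofFinite Y
  obtain ⟨e⟩ : Nonempty (Y ↪ Fin n) :=
    Function.Embedding.nonempty_of_card_le (by simpa [Nat.card_eq_fintype_card] using hY)
  have hsurj := Function.invFun_surjective e.injective
  exact (isPMorphism_of_surjective hsurj).kvalid_of_surjective hsurj h

/-- With `s` variables a cluster has at most `2 ^ s` types of points; identifying points of
the same type is a surjective p-morphism onto a cluster with at most `2 ^ s` points. -/
theorem kvalid_total_of_kvalid_totR_two_pow {s : ℕ} {φ : Fm} (hφ : φ.vars ⊆ Finset.range s)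
    (h : kvalid (totR (2 ^ s)) φ) (X : Type*) : kvalid (fun _ _ : X => True) φ := by
  intro ϑ x
  let type : X → Fin s → Prop := fun v j => v ∈ ϑ j
  let ϑT : ℕ → Set (Set.range type) := fun n => {τ | ∃ hn : n < s, τ.1 ⟨n, hn⟩}
  have : Nonempty (Set.range type) := ⟨Set.rangeFactorization type x⟩
  have hcard : Nat.card (Set.range type) ≤ 2 ^ s := by
    refine (Finite.card_subtype_le (· ∈ Set.range type)).trans_eq ?_
    simp [Nat.card_eq_fintype_card, Fintype.card_prop]
  have hT := kvalid_total_of_card_le hcard h ϑT (Set.rangeFactorization type x)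
  rw [← (isPMorphism_of_surjective Set.rangeFactorization_surjective).ksatN_comap_iff] at hT
  refine (ksatN_congr_vars _ φ (fun n hn => ?_) x).1 hT
  ext v
  simp [ϑT, type, Set.rangeFactorization, Finset.mem_range.1 (hφ hn)]

/-- A formula with at most `s` variables is valid in all S5 frames (frames whose
accessibility relation is an equivalence relation) iff it is valid in the cluster
`C_{2^s}`; consequently, for `k ≥ 2^s`, validity on `C_k` coincides with validity
on every cluster `C_m`, `m ≥ 1`. -/
theorem s5_s_variable_fragment (s : ℕ) (φ : Fm) (hφ : φ.vars ⊆ Finset.range s) :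
    ((∀ (W : Type) (R : W → W → Prop), Equivalence R → kvalid R φ) ↔
      kvalid (totR (2 ^ s)) φ) ∧
    (∀ k, 2 ^ s ≤ k →
      (kvalid (totR k) φ ↔ ∀ m, 1 ≤ m → kvalid (totR m) φ)) := by
  have hS5 : (∀ (W : Type) (R : W → W → Prop), Equivalence R → kvalid R φ) ↔
      kvalid (totR (2 ^ s)) φ := by
    refine ⟨fun h => h _ _ ⟨fun _ => trivial, fun _ => trivial, fun _ _ => trivial⟩,
      fun h _ _ hR => kvalid_of_forall_kvalid_cluster hR fun _ =>
        kvalid_total_of_kvalid_totR_two_pow hφ h _⟩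
  refine ⟨hS5, fun k hk => ⟨fun h m _ => ?_, fun h => h k (Nat.one_le_two_pow.trans hk)⟩⟩
  have : Nonempty (Fin (2 ^ s)) := ⟨⟨0, Nat.two_pow_pos s⟩⟩
  have h2s : kvalid (totR (2 ^ s)) φ := kvalid_total_of_card_le (by simpa using hk) h
  exact kvalid_total_of_kvalid_totR_two_pow hφ h2s (Fin m)
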